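/- arXiv:2211.13570 — 2 statements merged into one kernel-verified Lean document; each statement's English description precedes it below -/
import Mathlib

section
/- Let k, ℓ be real numbers and define q_n = t_n − k and r_n = t_n + ℓ for all n ≥ 0, and let λ(s;k,ℓ) = 2^s − (2^s(k − ℓ) + (k + ℓ)). If s is a complex number with Re(s) > 1 and λ(s;k,ℓ) = 2^s − 2, then (2^s + 1)·∑_{n≥1} q_{n-1}/n^s + (2^s − 1)·∑_{n≥1} r_n/n^s = 2^s·η(s), where η(s) = ∑_{n≥1} (−1)^{n−1}/n^s is the alternating zeta (Dirichlet eta) function. -/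
open Complex

/-- The Thue-Morse sequence: binary digit sum of `n` modulo 2. -/
def tm (n : ℕ) : ℕ := (Nat.digits 2 n).sum % 2

/-- The ±1 Thue-Morse sequence `ε n = (-1)^(t n)`. -/
noncomputable def eps (n : ℕ) : ℂ := (-1) ^ tm n

lemma digitsSum_two_mul (n : ℕ) : (Nat.digits 2 (2 * n)).sum = (Nat.digits 2 n).sum := by
  rcases Nat.eq_zero_or_pos n with h | h
  · simp [h]
  · rw [Nat.digits_def' (by norm_num : 1 < 2) (by omega)]
    simp [Nat.mul_div_cancel_left, Nat.mul_mod_right]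

lemma digitsSum_two_mul_add_one (n : ℕ) :
    (Nat.digits 2 (2 * n + 1)).sum = 1 + (Nat.digits 2 n).sum := by
  rw [Nat.digits_def' (by norm_num : 1 < 2) (by omega)]
  have h1 : (2 * n + 1) % 2 = 1 := by omega
  have h2 : (2 * n + 1) / 2 = n := by omega
  rw [h1, h2, List.sum_cons]

lemma neg_one_pow_mod_two (m : ℕ) : ((-1 : ℂ)) ^ (m % 2) = (-1) ^ m := by
  conv_rhs => rw [← Nat.div_add_mod m 2]
  rw [pow_add, pow_mul]
  simp

lemma eps_two_mul (n : ℕ) : eps (2 * n) = eps n := by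
  unfold eps tm
  rw [digitsSum_two_mul]

lemma eps_two_mul_add_one (n : ℕ) : eps (2 * n + 1) = - eps n := by
  unfold eps tm
  rw [neg_one_pow_mod_two, neg_one_pow_mod_two, digitsSum_two_mul_add_one, pow_add]
  ring

section aux
variable {s : ℂ}

lemma two_mul_cpow (j : ℕ) (s : ℂ) :
    ((2 : ℂ) * ((j : ℂ) + 1)) ^ s = (2 : ℂ) ^ s * ((j : ℂ) + 1) ^ s := by
  have h := mul_cpow_ofReal_nonneg (by norm_num : (0:ℝ) ≤ 2)
    (by positivity : (0:ℝ) ≤ (j : ℝ) + 1) s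
  push_cast at h
  exact h

lemma cpow_ne (j : ℕ) (s : ℂ) : ((j : ℂ) + 1) ^ s ≠ 0 := by
  have h : ((j : ℂ) + 1) ≠ 0 := Nat.cast_add_one_ne_zero j
  simp [Complex.cpow_eq_zero_iff, h]

lemma hZbase (hs : 1 < s.re) : Summable (fun n : ℕ => 1 / ((n : ℂ) + 1) ^ s) := by
  have h0 : Summable (fun n : ℕ => 1 / (n : ℂ) ^ s) :=
    Complex.summable_one_div_nat_cpow.mpr hs
  refine (h0.comp_injective (add_left_injective 1)).congr fun n => ?_
  simp only [Function.comp]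
  push_cast
  ring

lemma key_summable (hs : 1 < s.re) (a : ℕ → ℂ) (C : ℝ) (hC : ∀ n, ‖a n‖ ≤ C) :
    Summable (fun n : ℕ => a n / ((n : ℂ) + 1) ^ s) := by
  have hZ := hZbase hs
  refine Summable.of_norm_bounded (g := fun n => C * ‖1 / ((n : ℂ) + 1) ^ s‖)
    ((summable_norm_iff.mpr hZ).mul_left C) (fun n => ?_)
  have hpos : (0:ℝ) < ‖((n : ℂ) + 1) ^ s‖ := norm_pos_iff.mpr (cpow_ne n s)
  simp only [norm_div, norm_one, mul_one_div]
  gcongr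
  exact hC n

lemma split_even_odd (f : ℕ → ℂ) (hf : Summable f) :
    (∑' j, f (2 * j)) + (∑' j, f (2 * j + 1)) = ∑' n, f n := by
  have he : Summable fun j => f (2 * j) := by
    have := hf.comp_injective (i := fun j : ℕ => 2 * j) (fun a b h => by simp only [] at h; omega)
    simpa [Function.comp_def] using this
  have ho : Summable fun j => f (2 * j + 1) := by
    have := hf.comp_injective (i := fun j : ℕ => 2 * j + 1) (fun a b h => by simp only [] at h; omega)
    simpa [Function.comp_def] using this
  exact tsum_even_add_odd he ho

lemma norm_eps (n : ℕ) : ‖eps n‖ = 1 := by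
  simp [eps]

lemma relE (hs : 1 < s.re) :
    (∑' j : ℕ, eps j / (2 * (j : ℂ) + 1) ^ s)
      + (-((2:ℂ)^s)⁻¹) * (∑' n : ℕ, eps n / ((n : ℂ) + 1) ^ s)
    = ∑' n : ℕ, eps n / ((n : ℂ) + 1) ^ s := by
  have hE : Summable (fun n : ℕ => eps n / ((n : ℂ) + 1) ^ s) :=
    key_summable hs _ 1 (fun n => le_of_eq (norm_eps n))
  have h := split_even_odd (fun n : ℕ => eps n / ((n : ℂ) + 1) ^ s) hE
  conv_rhs => rw [← h]
  congr 1
  · refine tsum_congr fun j => ?_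
    simp only [eps_two_mul]
    push_cast
    rfl
  · rw [← tsum_mul_left]
    refine tsum_congr fun j => ?_
    simp only [eps_two_mul_add_one]
    have hb : ((2 * j + 1 : ℕ) : ℂ) + 1 = 2 * ((j : ℂ) + 1) := by push_cast; ring
    push_cast
    rw [show (2 : ℂ) * (j : ℂ) + 1 + 1 = 2 * ((j : ℂ) + 1) by ring, two_mul_cpow]
    ring

lemma relE' (hs : 1 < s.re) :
    (-1 : ℂ) * (∑' j : ℕ, eps j / (2 * (j : ℂ) + 1) ^ s)
      + ((2:ℂ)^s)⁻¹ * (∑' n : ℕ, eps (n + 1) / ((n : ℂ) + 1) ^ s)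
    = ∑' n : ℕ, eps (n + 1) / ((n : ℂ) + 1) ^ s := by
  have hE' : Summable (fun n : ℕ => eps (n + 1) / ((n : ℂ) + 1) ^ s) :=
    key_summable hs _ 1 (fun n => le_of_eq (norm_eps _))
  have h := split_even_odd (fun n : ℕ => eps (n + 1) / ((n : ℂ) + 1) ^ s) hE'
  conv_rhs => rw [← h]
  congr 1
  · rw [← tsum_mul_left]
    refine tsum_congr fun j => ?_
    simp only [eps_two_mul_add_one]
    push_cast
    ring
  · rw [← tsum_mul_left]
    refine tsum_congr fun j => ?_
    simp only [show ∀ j : ℕ, 2 * j + 1 + 1 = 2 * (j + 1) from fun j => by ring, eps_two_mul]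
    push_cast
    rw [show (2 : ℂ) * (j : ℂ) + 1 + 1 = 2 * ((j : ℂ) + 1) by ring, two_mul_cpow]
    ring

lemma relZ (hs : 1 < s.re) :
    (∑' j : ℕ, 1 / (2 * (j : ℂ) + 1) ^ s)
      + ((2:ℂ)^s)⁻¹ * (∑' n : ℕ, 1 / ((n : ℂ) + 1) ^ s)
    = ∑' n : ℕ, 1 / ((n : ℂ) + 1) ^ s := by
  have hZ := hZbase (s := s) hs
  have h := split_even_odd (fun n : ℕ => 1 / ((n : ℂ) + 1) ^ s) hZ
  conv_rhs => rw [← h]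
  congr 1
  · refine tsum_congr fun j => ?_
    push_cast
    rfl
  · rw [← tsum_mul_left]
    refine tsum_congr fun j => ?_
    push_cast
    rw [show (2 : ℂ) * (j : ℂ) + 1 + 1 = 2 * ((j : ℂ) + 1) by ring, two_mul_cpow]
    ring

lemma relH (hs : 1 < s.re) :
    (∑' j : ℕ, 1 / (2 * (j : ℂ) + 1) ^ s)
      + (-((2:ℂ)^s)⁻¹) * (∑' n : ℕ, 1 / ((n : ℂ) + 1) ^ s)
    = ∑' n : ℕ, (-1 : ℂ) ^ n / ((n : ℂ) + 1) ^ s := by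
  have hH : Summable (fun n : ℕ => (-1 : ℂ) ^ n / ((n : ℂ) + 1) ^ s) :=
    key_summable hs _ 1 (fun n => by simp)
  have h := split_even_odd (fun n : ℕ => (-1 : ℂ) ^ n / ((n : ℂ) + 1) ^ s) hH
  conv_rhs => rw [← h]
  congr 1
  · refine tsum_congr fun j => ?_
    simp only [pow_mul, neg_one_sq, one_pow]
    push_cast
    rw [one_div]
  · rw [← tsum_mul_left]
    refine tsum_congr fun j => ?_
    simp only [pow_add, pow_mul, neg_one_sq, one_pow, pow_one, one_mul]
    push_cast
    rw [show (2 : ℂ) * (j : ℂ) + 1 + 1 = 2 * ((j : ℂ) + 1) by ring, two_mul_cpow]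
    ring

end aux

theorem stmt_14 (k l : ℝ) (s : ℂ) (hs : 1 < s.re)
    (hl : (2 : ℂ) ^ s - (2 ^ s * ((k : ℂ) - l) + ((k : ℂ) + l)) = 2 ^ s - 2) :
    (2 ^ s + 1) * (∑' n : ℕ, ((tm n : ℂ) - (k : ℂ)) / ((n : ℂ) + 1) ^ s) +
      (2 ^ s - 1) * (∑' n : ℕ, ((tm (n + 1) : ℂ) + (l : ℂ)) / ((n : ℂ) + 1) ^ s) =
    2 ^ s * ∑' n : ℕ, (-1 : ℂ) ^ n / ((n : ℂ) + 1) ^ s := by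
  have ha : (2 : ℂ) ^ s ≠ 0 := by
    simp [Complex.cpow_eq_zero_iff]
  have hinv : (2 : ℂ) ^ s * ((2:ℂ)^s)⁻¹ = 1 := mul_inv_cancel₀ ha
  have hk : (2 : ℂ) ^ s * ((k : ℂ) - l) + ((k : ℂ) + l) = 2 := by
    linear_combination -hl
  have hZ := hZbase hs
  have hE : Summable (fun n : ℕ => eps n / ((n : ℂ) + 1) ^ s) :=
    key_summable hs _ 1 (fun n => le_of_eq (norm_eps n))
  have hE' : Summable (fun n : ℕ => eps (n + 1) / ((n : ℂ) + 1) ^ s) :=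
    key_summable hs _ 1 (fun n => le_of_eq (norm_eps _))
  have htm : ∀ n : ℕ, (tm n : ℂ) = (1 - eps n) / 2 := by
    intro n
    have h2 : tm n = 0 ∨ tm n = 1 := by unfold tm; omega
    rcases h2 with h | h <;> simp [eps, h]
  have decomp1 : (∑' n : ℕ, ((tm n : ℂ) - (k : ℂ)) / ((n : ℂ) + 1) ^ s)
      = (1/2 - (k : ℂ)) * (∑' n : ℕ, 1 / ((n : ℂ) + 1) ^ s)
        - (1/2) * (∑' n : ℕ, eps n / ((n : ℂ) + 1) ^ s) := by
    have step : ∀ n : ℕ, ((tm n : ℂ) - (k : ℂ)) / ((n : ℂ) + 1) ^ s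
        = (1/2 - (k : ℂ)) * (1 / ((n : ℂ) + 1) ^ s)
          + (-(1/2)) * (eps n / ((n : ℂ) + 1) ^ s) := by
      intro n
      rw [htm n]
      ring
    rw [tsum_congr step, Summable.tsum_add (hZ.mul_left _) (hE.mul_left _), tsum_mul_left, tsum_mul_left]
    ring
  have decomp2 : (∑' n : ℕ, ((tm (n + 1) : ℂ) + (l : ℂ)) / ((n : ℂ) + 1) ^ s)
      = (1/2 + (l : ℂ)) * (∑' n : ℕ, 1 / ((n : ℂ) + 1) ^ s)
        - (1/2) * (∑' n : ℕ, eps (n + 1) / ((n : ℂ) + 1) ^ s) := by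
    have step : ∀ n : ℕ, ((tm (n + 1) : ℂ) + (l : ℂ)) / ((n : ℂ) + 1) ^ s
        = (1/2 + (l : ℂ)) * (1 / ((n : ℂ) + 1) ^ s)
          + (-(1/2)) * (eps (n + 1) / ((n : ℂ) + 1) ^ s) := by
      intro n
      rw [htm (n + 1)]
      ring
    rw [tsum_congr step, Summable.tsum_add (hZ.mul_left _) (hE'.mul_left _), tsum_mul_left, tsum_mul_left]
    ring
  have r1 := relE hs
  have r2 := relE' hs
  have r3 := relZ hs
  have r4 := relH hs
  set a : ℂ := (2 : ℂ) ^ s with ha_def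
  set Z := ∑' n : ℕ, 1 / ((n : ℂ) + 1) ^ s with hZ_def
  set E := ∑' n : ℕ, eps n / ((n : ℂ) + 1) ^ s with hE_def
  set E' := ∑' n : ℕ, eps (n + 1) / ((n : ℂ) + 1) ^ s with hE'_def
  set H := ∑' n : ℕ, (-1 : ℂ) ^ n / ((n : ℂ) + 1) ^ s with hH_def
  set O := ∑' j : ℕ, eps j / (2 * (j : ℂ) + 1) ^ s with hO_def
  set OZ := ∑' j : ℕ, 1 / (2 * (j : ℂ) + 1) ^ s with hOZ_def
  rw [decomp1, decomp2]
  linear_combination (a/2) * r1 + (a/2) * r2 + (-a) * r3 + a * r4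
    + ((E - E')/2 + 2*Z) * hinv + (-Z) * hk
end

section
/- Define q_n = t_n − 1 and r_n = t_n + 1/3 for all n ≥ 0. Then 5·∑_{n≥1} q_{n-1}/n² = −3·∑_{n≥1} r_n/n². -/
open Complex

lemma tm_lt_two (n : ℕ) : tm n < 2 := Nat.mod_lt _ (by norm_num)

lemma tm_two_mul (k : ℕ) : tm (2 * k) = tm k := by
  rcases Nat.eq_zero_or_pos k with h | h
  · simp [h]
  · unfold tm
    rw [Nat.digits_def' (by norm_num : 1 < 2) (by omega)]
    have h1 : (2 * k) % 2 = 0 := by omega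
    have h2 : (2 * k) / 2 = k := by omega
    rw [h1, h2]
    simp

lemma tm_odd (k : ℕ) : tm (2 * k + 1) = (tm k + 1) % 2 := by
  unfold tm
  rw [Nat.digits_def' (by norm_num : 1 < 2) (by omega)]
  have h1 : (2 * k + 1) % 2 = 1 := by omega
  have h2 : (2 * k + 1) / 2 = k := by omega
  rw [h1, h2]
  simp only [List.sum_cons]
  omega

lemma quarter (a x : ℝ) : a / (2 * x) ^ 2 = 1 / 4 * (a / x ^ 2) := by
  rw [mul_pow, ← div_div]
  ring

lemma tm_odd_real (k : ℕ) : (tm (2 * k + 1) : ℝ) = 1 - tm k := by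
  have h := tm_lt_two k
  have : tm k = 0 ∨ tm k = 1 := by omega
  rcases this with h' | h' <;> rw [tm_odd, h'] <;> norm_num

theorem stmt_15 :
    5 * (∑' n : ℕ, ((tm n : ℝ) - 1) / ((n : ℝ) + 1) ^ 2) =
      -3 * ∑' n : ℕ, ((tm (n + 1) : ℝ) + 1 / 3) / ((n : ℝ) + 1) ^ 2 := by
  -- base summability
  have hS0 : Summable (fun n : ℕ => 1 / ((n : ℝ) + 1) ^ 2) := by
    have h1 : Summable (fun n : ℕ => 1 / (n : ℝ) ^ 2) :=
      Real.summable_one_div_nat_pow.mpr (by norm_num)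
    have h2 := (summable_nat_add_iff 1).mpr h1
    apply h2.congr
    intro n
    push_cast
    ring
  have hdom : ∀ c : ℕ → ℕ, (∀ n, c n ≤ 1) →
      Summable (fun n : ℕ => (c n : ℝ) / ((n : ℝ) + 1) ^ 2) := by
    intro c hc
    apply Summable.of_nonneg_of_le (fun n => by positivity) _ hS0
    intro n
    gcongr
    exact_mod_cast hc n
  have hC : Summable (fun n : ℕ => (tm n : ℝ) / ((n : ℝ) + 1) ^ 2) :=
    hdom tm (fun n => by have := tm_lt_two n; omega)
  have hB : Summable (fun n : ℕ => (tm (n + 1) : ℝ) / ((n : ℝ) + 1) ^ 2) :=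
    hdom (fun n => tm (n + 1)) (fun n => Nat.lt_succ_iff.mp (tm_lt_two (n + 1)))
  set S : ℝ := ∑' n : ℕ, 1 / ((n : ℝ) + 1) ^ 2 with hSdef
  set C : ℝ := ∑' n : ℕ, (tm n : ℝ) / ((n : ℝ) + 1) ^ 2 with hCdef
  set B : ℝ := ∑' n : ℕ, (tm (n + 1) : ℝ) / ((n : ℝ) + 1) ^ 2 with hBdef
  have inj2 : Function.Injective (fun k : ℕ => 2 * k) := fun a b h => by simp only at h; omega
  have inj21 : Function.Injective (fun k : ℕ => 2 * k + 1) := fun a b h => by simp only at h; omega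
  -- even/odd summable pieces
  have hSe : Summable (fun k : ℕ => 1 / ((2 * k : ℕ) + 1 : ℝ) ^ 2) := by
    have := hS0.comp_injective inj2
    apply this.congr; intro k; simp
  have hSo : Summable (fun k : ℕ => 1 / (((2 * k + 1 : ℕ) : ℝ) + 1) ^ 2) :=
    hS0.comp_injective inj21
  have hCe : Summable (fun k : ℕ => (tm (2 * k) : ℝ) / (((2 * k : ℕ) : ℝ) + 1) ^ 2) :=
    hC.comp_injective inj2
  have hCo : Summable (fun k : ℕ => (tm (2 * k + 1) : ℝ) / (((2 * k + 1 : ℕ) : ℝ) + 1) ^ 2) :=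
    hC.comp_injective inj21
  have hBe : Summable (fun k : ℕ => (tm (2 * k + 1) : ℝ) / (((2 * k : ℕ) : ℝ) + 1) ^ 2) :=
    hB.comp_injective inj2
  have hBo : Summable (fun k : ℕ => (tm (2 * k + 1 + 1) : ℝ) / (((2 * k + 1 : ℕ) : ℝ) + 1) ^ 2) :=
    hB.comp_injective inj21
  -- names for even parts
  set ES : ℝ := ∑' k : ℕ, 1 / (((2 * k : ℕ) : ℝ) + 1) ^ 2 with hESdef
  set EC : ℝ := ∑' k : ℕ, (tm (2 * k) : ℝ) / (((2 * k : ℕ) : ℝ) + 1) ^ 2 with hECdef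
  -- equation 1 : ES + S/4 = S
  have eq1 : ES + (1 / 4) * S = S := by
    have h := tsum_even_add_odd (f := fun n : ℕ => 1 / ((n : ℝ) + 1) ^ 2)
      (hS0.comp_injective inj2) hSo
    have ho : (∑' k : ℕ, 1 / (((2 * k + 1 : ℕ) : ℝ) + 1) ^ 2)
        = ∑' k : ℕ, (1 / 4) * (1 / ((k : ℝ) + 1) ^ 2) := by
      apply tsum_congr; intro k
      push_cast
      rw [show (2 * (k : ℝ) + 1) + 1 = 2 * ((k : ℝ) + 1) by ring, quarter]
    rw [ho, tsum_mul_left] at h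
    exact h
  -- equation 2 : EC + (S/4 - C/4) = C
  have eq2 : EC + ((1 / 4) * S - (1 / 4) * C) = C := by
    have h := tsum_even_add_odd (f := fun n : ℕ => (tm n : ℝ) / ((n : ℝ) + 1) ^ 2)
      (hC.comp_injective inj2) hCo
    have ho : (∑' k : ℕ, (tm (2 * k + 1) : ℝ) / (((2 * k + 1 : ℕ) : ℝ) + 1) ^ 2)
        = ∑' k : ℕ, ((1 / 4) * (1 / ((k : ℝ) + 1) ^ 2)
            - (1 / 4) * ((tm k : ℝ) / ((k : ℝ) + 1) ^ 2)) := by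
      apply tsum_congr; intro k
      rw [tm_odd_real]
      push_cast
      rw [show (2 * (k : ℝ) + 1) + 1 = 2 * ((k : ℝ) + 1) by ring, quarter]
      ring
    rw [ho, Summable.tsum_sub (hS0.mul_left _) (hC.mul_left _),
      tsum_mul_left, tsum_mul_left] at h
    exact h
  -- equation 3 : (ES - EC) + B/4 = B
  have eq3 : (ES - EC) + (1 / 4) * B = B := by
    have h := tsum_even_add_odd (f := fun n : ℕ => (tm (n + 1) : ℝ) / ((n : ℝ) + 1) ^ 2)
      (hB.comp_injective inj2) hBo
    have he : (∑' k : ℕ, (tm (2 * k + 1) : ℝ) / (((2 * k : ℕ) : ℝ) + 1) ^ 2)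
        = ∑' k : ℕ, (1 / (((2 * k : ℕ) : ℝ) + 1) ^ 2
            - (tm (2 * k) : ℝ) / (((2 * k : ℕ) : ℝ) + 1) ^ 2) := by
      apply tsum_congr; intro k
      rw [tm_odd_real, tm_two_mul]
      ring
    have ho : (∑' k : ℕ, (tm (2 * k + 1 + 1) : ℝ) / (((2 * k + 1 : ℕ) : ℝ) + 1) ^ 2)
        = ∑' k : ℕ, (1 / 4) * ((tm (k + 1) : ℝ) / ((k : ℝ) + 1) ^ 2) := by
      apply tsum_congr; intro k
      have h2 : tm (2 * k + 1 + 1) = tm (k + 1) := by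
        have : 2 * k + 1 + 1 = 2 * (k + 1) := by ring
        rw [this, tm_two_mul]
      rw [h2]
      push_cast
      rw [show (2 * (k : ℝ) + 1) + 1 = 2 * ((k : ℝ) + 1) by ring, quarter]
    rw [he, ho, Summable.tsum_sub hSe hCe, tsum_mul_left] at h
    exact h
  -- rewrite the goal sums
  have hL : (∑' n : ℕ, ((tm n : ℝ) - 1) / ((n : ℝ) + 1) ^ 2) = C - S := by
    have : (∑' n : ℕ, ((tm n : ℝ) - 1) / ((n : ℝ) + 1) ^ 2)
        = ∑' n : ℕ, ((tm n : ℝ) / ((n : ℝ) + 1) ^ 2 - 1 / ((n : ℝ) + 1) ^ 2) := by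
      apply tsum_congr; intro n; ring
    rw [this, Summable.tsum_sub hC hS0]
  have hR : (∑' n : ℕ, ((tm (n + 1) : ℝ) + 1 / 3) / ((n : ℝ) + 1) ^ 2)
      = B + (1 / 3) * S := by
    have : (∑' n : ℕ, ((tm (n + 1) : ℝ) + 1 / 3) / ((n : ℝ) + 1) ^ 2)
        = ∑' n : ℕ, ((tm (n + 1) : ℝ) / ((n : ℝ) + 1) ^ 2
            + (1 / 3) * (1 / ((n : ℝ) + 1) ^ 2)) := by
      apply tsum_congr; intro n; ring
    rw [this, Summable.tsum_add hB (hS0.mul_left _), tsum_mul_left]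
  rw [hL, hR]
  linarith
end
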